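/- For all real numbers p, q with 0 < p < 1, 0 < q < 1 and p + q < 1, one has P₅(p,q) ≤ 1/6, with equality if and only if p = q = 1/3. In particular the maximum of P₅ over the admissible parameter region equals 1/6 and is attained precisely at p = q = 1/3. -/
import Mathlib


noncomputable section

def β (p q : ℝ) : ℝ := (1 - p) * (1 - q) * (p + q) * (p + q - p^2 - q^2 - p*q)

def P₃ (p q : ℝ) : ℝ := (β p q)⁻¹ * (2*p*q*(1-p)*(1-q)*(p+q)*(1-p-q))

def P₄ (p q : ℝ) : ℝ := (β p q)⁻¹ *
  (6*p^2*q^2*(p+q)^2 + 2*p*q*(12*p*q+1) - 22*p^2*q^2*(p+q)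
    - p^2*(5*p^2*q - 12*p*q + 2*p + 9*q - p^2 - 1)
    - q^2*(5*p*q^2 - 12*p*q + 2*q + 9*p - q^2 - 1))

def P₅ (p q : ℝ) : ℝ := (β p q)⁻¹ *
  (6*p^2*q^2*(p+q)*(1-p-q) - 2*p*q*(1-p-q)*(p^2+q^2)
    + 2*p*q*(p+q)*(1-p-q) - 8*p^2*q^2*(1-p-q))

def P₆ (p q : ℝ) : ℝ := (β p q)⁻¹ * (2*p^2*q^2*(1-p-q)^2)

end


lemma beta_pos {p q : ℝ} (hp0 : 0 < p) (hp1 : p < 1) (hq0 : 0 < q) (hq1 : q < 1)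
    (hpq : p + q < 1) : 0 < β p q := by
  have h4 : 0 < p + q - p^2 - q^2 - p*q := by nlinarith [mul_pos hp0 hq0, sq_nonneg (p+q)]
  exact mul_pos (mul_pos (mul_pos (by linarith) (by linarith)) (by linarith)) h4

lemma F2_nonpos {p q : ℝ} (hp0 : 0 < p) (hq0 : 0 < q) (hpq : p + q < 1) :
    (8 - 9*(p+q))*(p*q) - (p+q)*(1-p-q) ≤ 0 := by
  rcases le_or_gt (p + q) (8/9) with h | h
  · nlinarith [mul_nonneg (show (0:ℝ) ≤ 8 - 9*(p+q) by linarith) (sq_nonneg (p-q)),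
      mul_nonneg (by linarith : (0:ℝ) ≤ p + q) (sq_nonneg (3*(p+q)-2))]
  · nlinarith [mul_pos (show (0:ℝ) < 9*(p+q) - 8 by linarith) (mul_pos hp0 hq0),
      mul_pos (add_pos hp0 hq0) (show (0:ℝ) < 1 - (p+q) by linarith)]

lemma main_lemma {p q : ℝ} (hp0 : 0 < p) (hp1 : p < 1) (hq0 : 0 < q) (hq1 : q < 1)
    (hpq : p + q < 1) :
    P₅ p q ≤ 1/6 ∧ (P₅ p q = 1/6 ↔ p = 1/3 ∧ q = 1/3) := by
  have hβ : 0 < β p q := beta_pos hp0 hp1 hq0 hq1 hpq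
  set N : ℝ := 6*p^2*q^2*(p+q)*(1-p-q) - 2*p*q*(1-p-q)*(p^2+q^2)
      + 2*p*q*(p+q)*(1-p-q) - 8*p^2*q^2*(1-p-q) with hN
  have hP : P₅ p q = (β p q)⁻¹ * N := rfl
  have hF2 := F2_nonpos hp0 hq0 hpq
  have hF1 : (3 - 4*(p+q))*(p*q) - (p+q)*(1-p-q) < 0 := by
    nlinarith [mul_pos (show (0:ℝ) < 1 - (p+q) by linarith) (mul_pos hp0 hq0)]
  have key : β p q - 6*N = ((3 - 4*(p+q))*(p*q) - (p+q)*(1-p-q)) *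
      ((8 - 9*(p+q))*(p*q) - (p+q)*(1-p-q)) := by
    simp only [hN, β]; ring
  have hD : 0 ≤ β p q - 6*N := by
    rw [key]; exact mul_nonneg_of_nonpos_of_nonpos hF1.le hF2
  constructor
  · rw [hP, inv_mul_le_iff₀ hβ]; linarith
  constructor
  · intro hEq
    rw [hP] at hEq
    have h6 : β p q - 6*N = 0 := by
      have : N = β p q * (1/6) := by
        field_simp at hEq ⊢; linarith
      rw [this]; ring
    rw [key] at h6
    have hF2z : (8 - 9*(p+q))*(p*q) - (p+q)*(1-p-q) = 0 :=
      (mul_eq_zero.1 h6).resolve_left hF1.ne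
    have h89 : 9*(p+q) < 8 := by
      by_contra hcon
      push_neg at hcon
      nlinarith [mul_nonneg (show (0:ℝ) ≤ 9*(p+q) - 8 by linarith) (mul_pos hp0 hq0).le,
        mul_pos (add_pos hp0 hq0) (show (0:ℝ) < 1 - (p+q) by linarith)]
    have h1 : (8 - 9*(p+q))*(p-q)^2 + (p+q)*(3*(p+q)-2)^2 = 0 := by
      linear_combination (-4:ℝ) * hF2z
    have h2 : (p-q)^2 ≤ 0 := by
      nlinarith [mul_nonneg (add_pos hp0 hq0).le (sq_nonneg (3*(p+q)-2)), sq_nonneg (p-q)]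
    have h3 : p = q := by
      have := sq_nonneg (p-q)
      have h4 : (p-q)^2 = 0 := le_antisymm h2 this
      have := pow_eq_zero_iff (n := 2) (by norm_num) |>.1 h4
      linarith [sub_eq_zero.1 this]
    subst h3
    have h5 : p*(3*p-1)^2 = 0 := by linear_combination (-(1:ℝ)/2) * hF2z
    have h6' : (3*p-1)^2 = 0 := by
      rcases mul_eq_zero.1 h5 with h | h
      · exact absurd h hp0.ne'
      · exact h
    have := pow_eq_zero_iff (n := 2) (by norm_num) |>.1 h6'
    constructor <;> linarith
  · rintro ⟨rfl, rfl⟩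
    simp only [hP, hN, β]
    norm_num

theorem stmt_7 (p q : ℝ) (hp0 : 0 < p) (hp1 : p < 1) (hq0 : 0 < q) (hq1 : q < 1)
    (hpq : p + q < 1) :
    (P₅ p q ≤ 1/6 ∧ (P₅ p q = 1/6 ↔ p = 1/3 ∧ q = 1/3)) ∧
    IsGreatest {x : ℝ | ∃ p' q' : ℝ, 0 < p' ∧ p' < 1 ∧ 0 < q' ∧ q' < 1 ∧ p' + q' < 1 ∧
      x = P₅ p' q'} (1/6) := by

  have hmain := main_lemma hp0 hp1 hq0 hq1 hpq
  refine ⟨hmain, ?_, ?_⟩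
  · exact ⟨1/3, 1/3, by norm_num, by norm_num, by norm_num, by norm_num, by norm_num,
      ((main_lemma (p := 1/3) (q := 1/3) (by norm_num) (by norm_num) (by norm_num)
        (by norm_num) (by norm_num)).2.2 ⟨rfl, rfl⟩).symm⟩
  · rintro x ⟨p', q', h1, h2, h3, h4, h5, rfl⟩
    exact (main_lemma h1 h2 h3 h4 h5).1
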